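/- arXiv:2502.01380 — 11 statements merged into one kernel-verified Lean document; each statement's English description precedes it below -/
import Mathlib

section
/- Let C be a finite nonempty set, let ≻ be a total tournament relation on C (for all distinct X, Y in C, X ≻ Y or Y ≻ X), let SC : C → ℝ be a strictly positive cost function, and let r ≥ 1 be such that for all X, Y in C, X ≻ Y implies SC(X) ≤ r · SC(Y). If W is in the uncovered set of the tournament (for every X ≠ W, either W ≻ X, or there exists Y with W ≻ Y and Y ≻ X), then SC(W) ≤ r² · SC(X) for every X in C; in particular SC(W) ≤ r² · min_{X ∈ C} SC(X). -/
/-- If `≻` is a total tournament on a finite nonempty set `C`,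
`SC` is a strictly positive cost function, `r ≥ 1` satisfies `X ≻ Y → SC X ≤ r · SC Y`,
and `W` is in the uncovered set, then `SC W ≤ r² · SC X` for every `X`. -/
theorem stmt1 {C : Type*} [Fintype C] [Nonempty C] (succ : C → C → Prop)
    (htot : ∀ X Y : C, X ≠ Y → succ X Y ∨ succ Y X)
    (SC : C → ℝ) (hSC : ∀ X, 0 < SC X)
    (r : ℝ) (hr : 1 ≤ r)
    (hstep : ∀ X Y, succ X Y → SC X ≤ r * SC Y)
    (W : C)
    (hW : ∀ X, X ≠ W → succ W X ∨ ∃ Y, succ W Y ∧ succ Y X) :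
    ∀ X : C, SC W ≤ r ^ 2 * SC X := by
  intro X
  have hr2 : (1:ℝ) ≤ r ^ 2 := by nlinarith
  by_cases hXW : X = W
  · subst hXW
    nlinarith [hSC X]
  · rcases hW X hXW with h | ⟨Y, h1, h2⟩
    · have := hstep W X h
      have h3 : r * SC X ≤ r ^ 2 * SC X := by
        have := mul_nonneg (mul_nonneg (sub_nonneg.2 hr) (by linarith : (0:ℝ) ≤ r)) (hSC X).le
        nlinarith
      linarith
    · have a := hstep W Y h1
      have b := hstep Y X h2
      have c : r * SC Y ≤ r * (r * SC X) := by nlinarith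
      nlinarith
end

section
/- For every integer k ≥ 1 and every probability distribution D on [−1,1] satisfying the k-sample median constraint, the expectation of D is at most 1/√k. -/
/-!
The sum `S` of `k` i.i.d. samples of `D`, of mean `m`, has mean `k m` and variance
`k Var[D] ≤ k (1 - m²)` (Bhatia–Davis on `[-1, 1]`). A random variable `X` that is `≤ 0` with
probability at least `1/2` has mean `a` at most its standard deviation: integrating
`4 a x ≤ x² + 4 a² 1_{x > 0}` gives `4 a² ≤ E[X²] + 2 a² = Var X + 3 a²`.
Applied to `S` this yields `k² m² ≤ k (1 - m²)`, so `m² ≤ 1 / (k + 1)`.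
-/

open MeasureTheory

/-- A probability distribution `μ` on `[-1,1]` satisfies the `k`-sample median constraint if
for `k` i.i.d. samples `Y_1, …, Y_k ~ μ`, `Pr[Y_1 + ⋯ + Y_k ≤ 0] ≥ 1/2`. -/
def MedianConstraint (k : ℕ) (μ : Measure ℝ) : Prop :=
  (1 : ENNReal) / 2 ≤ Measure.pi (fun _ : Fin k => μ) {y | ∑ i, y i ≤ 0}

open ProbabilityTheory

lemma mul_le_sq_add_indicator_Ioi {a : ℝ} (ha : 0 ≤ a) (x : ℝ) :
    4 * a * x ≤ x ^ 2 + (Set.Ioi 0).indicator (fun _ => 4 * a ^ 2) x := by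
  by_cases hx : 0 < x
  · rw [Set.indicator_of_mem (Set.mem_Ioi.2 hx)]
    nlinarith [sq_nonneg (x - 2 * a)]
  · rw [Set.indicator_of_notMem (by simpa using hx)]
    nlinarith [sq_nonneg x]

lemma le_one_div_sqrt_of_mul_le_sqrt {k m : ℝ} (hk : 0 < k) (h : k * m ≤ √(k * (1 - m ^ 2))) :
    m ≤ 1 / √k := by
  rcases le_or_gt m 0 with hm | hm
  · exact hm.trans (by positivity)
  rw [Real.le_sqrt' (by positivity)] at h
  rw [one_div, ← Real.sqrt_inv]
  refine Real.le_sqrt_of_sq_le ?_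
  rw [← one_div, le_div_iff₀ hk]
  nlinarith

section

variable {Ω : Type*} {mΩ : MeasurableSpace Ω} {ν : Measure Ω} [IsProbabilityMeasure ν]
  {X : Ω → ℝ}

lemma measureReal_pos_le_half (hX : AEMeasurable X ν)
    (hmed : (1 : ENNReal) / 2 ≤ ν {ω | X ω ≤ 0}) :
    ν.real {ω | 0 < X ω} ≤ 1 / 2 := by
  have hcompl : {ω | 0 < X ω} = {ω | X ω ≤ 0}ᶜ := by ext; simp
  rw [hcompl, probReal_compl_eq_one_sub₀ (nullMeasurableSet_le hX aemeasurable_const)]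
  have : (1 / 2 : ℝ) ≤ ν.real {ω | X ω ≤ 0} := by
    simpa [measureReal_def] using ENNReal.toReal_mono (measure_ne_top _ _) hmed
  linarith

theorem integral_le_sqrt_variance_of_median_nonpos (hX : MemLp X 2 ν)
    (hmed : (1 : ENNReal) / 2 ≤ ν {ω | X ω ≤ 0}) :
    ν[X] ≤ √(Var[X; ν]) := by
  set a := ν[X]
  rcases le_or_gt a 0 with ha | ha
  · exact ha.trans (Real.sqrt_nonneg _)
  have hpos : NullMeasurableSet {ω | 0 < X ω} ν :=
    nullMeasurableSet_lt aemeasurable_const hX.aemeasurable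
  have hind : Integrable ({ω | 0 < X ω}.indicator fun _ => 4 * a ^ 2) ν :=
    (integrable_const _).indicator₀ hpos
  have key : 4 * a * a ≤ ν[X ^ 2] + 4 * a ^ 2 * ν.real {ω | 0 < X ω} :=
    calc 4 * a * a = ∫ ω, 4 * a * X ω ∂ν := by rw [integral_const_mul]
      _ ≤ ∫ ω, X ω ^ 2 + {ω | 0 < X ω}.indicator (fun _ => 4 * a ^ 2) ω ∂ν :=
        integral_mono ((hX.integrable one_le_two).const_mul _) (hX.integrable_sq.add hind)
          fun ω => mul_le_sq_add_indicator_Ioi ha.le (X ω)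
      _ = ν[X ^ 2] + 4 * a ^ 2 * ν.real {ω | 0 < X ω} := by
        rw [integral_add hX.integrable_sq hind, integral_indicator₀ hpos, setIntegral_const,
          smul_eq_mul, mul_comm]
        rfl
  have hhalf := measureReal_pos_le_half hX.aemeasurable hmed
  refine Real.le_sqrt_of_sq_le ?_
  rw [variance_eq_sub hX]
  nlinarith

variable {ι : Type*} [Fintype ι]

lemma memLp_sum_pi (hX : MemLp X 2 ν) :
    MemLp (fun y => ∑ i, X (y i)) 2 (Measure.pi fun _ : ι => ν) :=
  memLp_finsetSum _ fun i _ => hX.comp_measurePreserving (measurePreserving_eval _ i)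

lemma integral_sum_pi (hX : Integrable X ν) :
    ∫ y, ∑ i, X (y i) ∂Measure.pi (fun _ : ι => ν) = Fintype.card ι * ν[X] := by
  rw [integral_finsetSum _ fun i _ => integrable_comp_eval hX]
  simp [integral_comp_eval (μ := fun _ : ι => ν) hX.aestronglyMeasurable]

lemma variance_sum_pi_const (hX : MemLp X 2 ν) :
    Var[fun y => ∑ i, X (y i); Measure.pi fun _ : ι => ν] = Fintype.card ι * Var[X; ν] := by
  have := variance_sum_pi (μ := fun _ : ι => ν) (X := fun _ => X) fun _ => hX
  simp only [Finset.sum_fn] at this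
  simp [this]

end

/-- For every `k ≥ 1` and every probability distribution on `[-1,1]`
satisfying the `k`-sample median constraint, the expectation is at most `1/√k`. -/
theorem stmt2 (k : ℕ) (hk : 1 ≤ k) (μ : Measure ℝ) [IsProbabilityMeasure μ]
    (hsupp : μ (Set.Icc (-1 : ℝ) 1)ᶜ = 0)
    (hmed : MedianConstraint k μ) :
    ∫ x, x ∂μ ≤ 1 / Real.sqrt k := by
  have hbound : ∀ᵐ x ∂μ, id x ∈ Set.Icc (-1 : ℝ) 1 := mem_ae_iff.2 hsupp
  have hL2 : MemLp id 2 μ := memLp_of_bounded hbound aestronglyMeasurable_id 2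
  have hvar : Var[id; μ] ≤ 1 - μ[id] ^ 2 := by
    have := variance_le_sub_mul_sub hbound aemeasurable_id
    nlinarith
  have hmean :=
    integral_le_sqrt_variance_of_median_nonpos (memLp_sum_pi (ι := Fin k) hL2) hmed
  rw [integral_sum_pi (hL2.integrable one_le_two), variance_sum_pi_const hL2] at hmean
  simp only [Fintype.card_fin, id] at hmean hvar
  exact le_one_div_sqrt_of_mul_le_sqrt (by exact_mod_cast hk)
    (hmean.trans (Real.sqrt_le_sqrt (by gcongr)))
end

section
/- For every odd integer k ≥ 1, the probability distribution D that takes value 1 with probability 1/2 and value −1 + 2/(k+1) with probability 1/2 satisfies the k-sample median constraint, and E[D] = 1/(k+1). In particular θ_k ≥ 1/(k+1) for odd k. -/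
/-!
With `c = 2 / (k + 1)`, the reflection `x ↦ c - x` swaps the two atoms `1` and `-1 + c`, so under
the product measure the sample sum `S` has the same law as `k c - S`. For odd `k` every sum of `k`
atoms is an integer multiple of `k c`, hence `S ≤ 0` or `S ≥ k c`. The two events have equal
probability and together are almost sure, so `Pr[S ≤ 0] ≥ 1/2`.
-/

open MeasureTheory

theorem MeasureTheory.MeasurePreserving.half_le_measure_of_ae_mem_or_mem {α : Type*}
    [MeasurableSpace α] {π : Measure α} [IsProbabilityMeasure π] {T : α → α}
    (hT : MeasurePreserving T π π) {A : Set α} (hA : NullMeasurableSet A π)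
    (hcover : ∀ᵐ x ∂π, x ∈ A ∨ T x ∈ A) : (1 : ENNReal) / 2 ≤ π A := by
  have hunion : (Set.univ : Set α) ≤ᵐ[π] (A ∪ T ⁻¹' A : Set α) := by
    filter_upwards [hcover] with x hx _ using hx
  have hpre : π (T ⁻¹' A) = π A := hT.measure_preimage hA
  rw [ENNReal.div_le_iff_le_mul (Or.inl two_ne_zero) (Or.inl ENNReal.ofNat_ne_top), mul_two]
  calc (1 : ENNReal) = π Set.univ := measure_univ.symm
    _ ≤ π (A ∪ T ⁻¹' A) := measure_mono_ae hunion
    _ ≤ π A + π A := (measure_union_le _ _).trans_eq (by rw [hpre])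

theorem medianConstraint_of_map_sub_eq {k : ℕ} {μ : Measure ℝ} [IsProbabilityMeasure μ] {c : ℝ}
    (hμ : μ.map (fun x => c - x) = μ)
    (hgap : ∀ᵐ y ∂Measure.pi (fun _ : Fin k => μ), ∑ i, y i ≤ 0 ∨ k * c ≤ ∑ i, y i) :
    MedianConstraint k μ := by
  have hreflect : MeasurePreserving (fun x : ℝ => c - x) μ μ :=
    ⟨measurable_const.sub measurable_id, hμ⟩
  refine (measurePreserving_pi _ _ fun _ => hreflect).half_le_measure_of_ae_mem_or_mem
    (measurableSet_le (by fun_prop) measurable_const).nullMeasurableSet ?_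
  filter_upwards [hgap] with y hy
  simpa [Finset.sum_sub_distrib] using hy

section TwoPoint

variable (x y : ℝ)

theorem map_add_sub_smul_dirac_add_smul_dirac (p : ENNReal) :
    (p • Measure.dirac x + p • Measure.dirac y).map (fun t => x + y - t)
      = p • Measure.dirac x + p • Measure.dirac y := by
  have hm : Measurable fun t : ℝ => x + y - t := measurable_const.sub measurable_id
  rw [Measure.map_add _ _ hm, Measure.map_smul, Measure.map_smul, Measure.map_dirac' hm,
    Measure.map_dirac' hm, add_sub_cancel_left, add_sub_cancel_right, add_comm]

theorem ae_eq_or_eq_smul_dirac_add_smul_dirac (p q : ENNReal) :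
    ∀ᵐ t ∂(p • Measure.dirac x + q • Measure.dirac y), t = x ∨ t = y := by
  rw [ae_add_measure_iff]
  exact ⟨Measure.ae_smul_measure (by simp [ae_dirac_eq]) p,
    Measure.ae_smul_measure (by simp [ae_dirac_eq]) q⟩

instance isProbabilityMeasure_half_smul_dirac_add_half_smul_dirac :
    IsProbabilityMeasure
      ((1 / 2 : ENNReal) • Measure.dirac x + (1 / 2 : ENNReal) • Measure.dirac y) :=
  ⟨by simp [ENNReal.inv_two_add_inv_two]⟩

theorem integral_id_half_smul_dirac_add_half_smul_dirac :
    ∫ t, t ∂((1 / 2 : ENNReal) • Measure.dirac x + (1 / 2 : ENNReal) • Measure.dirac y)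
      = (x + y) / 2 := by
  have hint (z : ℝ) : Integrable (fun t : ℝ => t) ((1 / 2 : ENNReal) • Measure.dirac z) :=
    (integrable_dirac enorm_lt_top).smul_measure (by norm_num)
  rw [integral_add_measure (hint x) (hint y), integral_smul_measure, integral_smul_measure,
    integral_dirac, integral_dirac]
  simp only [one_div, ENNReal.toReal_inv, ENNReal.toReal_ofNat, smul_eq_mul]
  ring

end TwoPoint

theorem Fintype.exists_sum_eq_of_forall_eq_or_eq {ι : Type*} [Fintype ι] {f : ι → ℝ} {b a : ℝ}
    (hf : ∀ i, f i = b ∨ f i = a) :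
    ∃ m n : ℕ, m + n = Fintype.card ι ∧ ∑ i, f i = m * b + n * a := by
  refine ⟨(Finset.univ.filter fun i => f i = b).card, (Finset.univ.filter fun i => f i ≠ b).card,
    Finset.card_filter_add_card_filter_not _, ?_⟩
  rw [← Finset.sum_filter_add_sum_filter_not _ (fun i => f i = b),
    Finset.sum_congr rfl fun i hi => (Finset.mem_filter.1 hi).2,
    Finset.sum_congr rfl fun i hi => (hf i).resolve_left (Finset.mem_filter.1 hi).2]
  simp

theorem le_zero_or_le_of_odd {k m n : ℕ} (hodd : Odd k) (hmn : m + n = k) :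
    m + n * (-1 + 2 / ((k : ℝ) + 1)) ≤ 0 ∨
      k * (2 / ((k : ℝ) + 1)) ≤ m + n * (-1 + 2 / ((k : ℝ) + 1)) := by
  obtain ⟨t, ht⟩ := hodd
  have hk : (k : ℝ) = 2 * t + 1 := by exact_mod_cast ht
  have hkc : 0 ≤ (k : ℝ) * (2 / ((k : ℝ) + 1)) := by positivity
  have hsum : (m : ℝ) + n * (-1 + 2 / ((k : ℝ) + 1)) = k * (2 / ((k : ℝ) + 1)) * (m - t) := by
    have hn : (n : ℝ) = k - m := by rw [← hmn]; push_cast; ring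
    rw [hn, hk]
    field_simp
    ring
  rw [hsum]
  rcases le_or_gt m t with hm | hm
  · exact .inl (mul_nonpos_of_nonneg_of_nonpos hkc (by simpa using hm))
  · refine .inr (le_mul_of_one_le_right hkc ?_)
    have : (t : ℝ) + 1 ≤ m := by exact_mod_cast hm
    linarith

theorem stmt5_general (k : ℕ) (hodd : Odd k)
    (μ : Measure ℝ)
    (hμ : μ = ((1 : ENNReal) / 2) • Measure.dirac (1 : ℝ)
        + ((1 : ENNReal) / 2) • Measure.dirac (-1 + 2 / ((k : ℝ) + 1))) :
    MedianConstraint k μ ∧ ∫ x, x ∂μ = 1 / ((k : ℝ) + 1) := by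
  have hc : (1 : ℝ) + (-1 + 2 / ((k : ℝ) + 1)) = 2 / ((k : ℝ) + 1) := by ring
  subst hμ
  refine ⟨medianConstraint_of_map_sub_eq (c := 2 / ((k : ℝ) + 1)) ?_ ?_, ?_⟩
  · simpa only [hc] using map_add_sub_smul_dirac_add_smul_dirac 1 (-1 + 2 / ((k : ℝ) + 1)) (1 / 2)
  · have hatoms := ae_eq_or_eq_smul_dirac_add_smul_dirac 1 (-1 + 2 / ((k : ℝ) + 1)) (1 / 2) (1 / 2)
    filter_upwards [ae_all_iff.2 fun i => Measure.tendsto_eval_ae_ae (i := i) hatoms] with y hy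
    obtain ⟨m, n, hmn, hsum⟩ := Fintype.exists_sum_eq_of_forall_eq_or_eq hy
    rw [hsum, mul_one]
    exact le_zero_or_le_of_odd hodd (by simpa using hmn)
  · rw [integral_id_half_smul_dirac_add_half_smul_dirac, hc]
    field_simp

/-- For every odd `k ≥ 1`, the distribution taking value `1` with probability
`1/2` and value `-1 + 2/(k+1)` with probability `1/2` satisfies the `k`-sample median
constraint and has expectation `1/(k+1)`. -/
theorem stmt5 (k : ℕ) (hk : 1 ≤ k) (hodd : Odd k)
    (μ : Measure ℝ)
    (hμ : μ = ((1 : ENNReal) / 2) • Measure.dirac (1 : ℝ)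
        + ((1 : ENNReal) / 2) • Measure.dirac (-1 + 2 / ((k : ℝ) + 1))) :
    MedianConstraint k μ ∧ ∫ x, x ∂μ = 1 / ((k : ℝ) + 1) :=
  stmt5_general k hodd μ hμ
end

section
/- For every even integer k ≥ 4, the probability distribution D that takes value 1 with probability 1/2 + 1/(3k) and value −1 with probability 1/2 − 1/(3k) satisfies the k-sample median constraint, and E[D] = 2/(3k). In particular θ_k ≥ 2/(3k) for even k ≥ 4, so θ_k = Ω(1/k) for all k ≥ 2. -/
/-!
Among `k = 2m` samples let `X` be the number of `+1`'s, so `X ~ Bin(2m, p)` with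
`p = 1/2 + 1/(6m)`, `q = 1 - p`, and the sum of the samples is `≤ 0` iff `X ≤ m`. Pair each value
`m + 1 + i` of the upper tail with `m - i`: the ratio of their probabilities is
`(m - i) / (m + i + 1) * (p / q) ^ (2i + 1)`, which is at most `1` by induction on `i` because
`p / q ≤ (m + 1) / m`. Hence `P(X > m) ≤ P(1 ≤ X ≤ m) ≤ P(X ≤ m)`, so `P(X ≤ m) ≥ 1/2`.
-/

open MeasureTheory

open Finset
open scoped ENNReal

theorem sum_range_le_two_mul_sum_range_of_reflect_le {f : ℕ → ℝ} (m : ℕ) (hf0 : 0 ≤ f 0)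
    (hreflect : ∀ i < m, f (m + 1 + i) ≤ f (m - i)) :
    ∑ j ∈ range (2 * m + 1), f j ≤ 2 * ∑ j ∈ range (m + 1), f j := by
  have htail : ∑ i ∈ range m, f (m + 1 + i) ≤ ∑ j ∈ range (m + 1), f j :=
    calc ∑ i ∈ range m, f (m + 1 + i)
        ≤ ∑ i ∈ range m, f (m - i) := sum_le_sum fun i hi => hreflect i (mem_range.1 hi)
      _ = ∑ i ∈ range m, f (i + 1) := by
        rw [← sum_range_reflect (fun i => f (i + 1))]
        exact sum_congr rfl fun i hi => congrArg f (by have := mem_range.1 hi; omega)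
      _ ≤ ∑ j ∈ range (m + 1), f j := by
        rw [sum_range_succ']
        exact le_add_of_nonneg_right hf0
  rw [show 2 * m + 1 = (m + 1) + m by ring, sum_range_add]
  linarith

theorem sub_mul_pow_le_add_succ_mul_pow {p q : ℝ} {m i : ℕ} (hq : 0 ≤ q) (hqp : q ≤ p)
    (hpq : m * p ≤ (m + 1) * q) (hi : i < m) :
    (m - i) * p ^ (2 * i + 1) ≤ (m + i + 1) * q ^ (2 * i + 1) := by
  induction i with
  | zero => simpa using hpq
  | succ i ih =>
    have hi' : (i : ℝ) + 1 < m := by exact_mod_cast hi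
    have ih := ih (by omega)
    have hp : 0 ≤ p := hq.trans hqp
    have hmi₀ : (0 : ℝ) < m - i := by linarith
    have hmi : (0 : ℝ) < (m - i) * (m + i + 1) := by positivity
    -- the factors are `m ^ 2 - (i + 1) ^ 2` and `(m + 1) ^ 2 - (i + 1) ^ 2`
    have hstep : p ^ 2 * ((m - i - 1) * (m + i + 1)) ≤ q ^ 2 * ((m - i) * (m + i + 2)) := by
      have hsq : (m * p) ^ 2 ≤ ((m + 1) * q) ^ 2 := pow_le_pow_left₀ (by positivity) hpq 2
      have hsq' : q ^ 2 * (i + 1) ^ 2 ≤ p ^ 2 * (i + 1) ^ 2 := by gcongr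
      linear_combination hsq + hsq'
    refine le_of_mul_le_mul_right ?_ hmi
    push_cast
    calc (m - (i + 1)) * p ^ (2 * (i + 1) + 1) * ((m - i) * (m + i + 1))
        = p ^ 2 * ((m - i - 1) * (m + i + 1)) * ((m - i) * p ^ (2 * i + 1)) := by ring
      _ ≤ q ^ 2 * ((m - i) * (m + i + 2)) * ((m + i + 1) * q ^ (2 * i + 1)) := by
        gcongr
      _ = (m + (i + 1) + 1) * q ^ (2 * (i + 1) + 1) * ((m - i) * (m + i + 1)) := by ring

theorem choose_mul_pow_le_choose_mul_pow_reflect {p q : ℝ} {m i : ℕ} (hp : 0 ≤ p) (hq : 0 ≤ q)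
    (hi : i < m) (h : (m - i) * p ^ (2 * i + 1) ≤ (m + i + 1) * q ^ (2 * i + 1)) :
    (2 * m).choose (m + 1 + i) * p ^ (m + 1 + i) * q ^ (2 * m - (m + 1 + i)) ≤
      (2 * m).choose (m - i) * p ^ (m - i) * q ^ (2 * m - (m - i)) := by
  obtain ⟨n, rfl⟩ : ∃ n, m = i + n + 1 := ⟨m - i - 1, by omega⟩
  have hsymm : (2 * (i + n + 1)).choose (i + n + 1 + 1 + i) = (2 * (i + n + 1)).choose n :=
    Nat.choose_symm_of_eq_add (by ring)
  have hsucc : ((2 * (i + n + 1)).choose (n + 1) : ℝ) * (n + 1) =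
      (2 * (i + n + 1)).choose n * (2 * i + n + 2) := by
    have := Nat.choose_succ_right_eq (2 * (i + n + 1)) n
    rw [show 2 * (i + n + 1) - n = 2 * i + n + 2 by omega] at this
    exact_mod_cast this
  rw [show i + n + 1 - i = n + 1 by omega, show 2 * (i + n + 1) - (i + n + 1 + 1 + i) = n by omega,
    show 2 * (i + n + 1) - (n + 1) = 2 * i + n + 1 by omega, hsymm]
  push_cast at h
  refine le_of_mul_le_mul_right ?_ (by positivity : (0 : ℝ) < 2 * i + n + 2)
  calc ((2 * (i + n + 1)).choose n : ℝ) * p ^ (i + n + 1 + 1 + i) * q ^ n * (2 * i + n + 2)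
      = (2 * (i + n + 1)).choose (n + 1) * p ^ (n + 1) * q ^ n *
          ((i + n + 1 - i) * p ^ (2 * i + 1)) := by
        linear_combination (-(p ^ (i + n + 1 + 1 + i) * q ^ n)) * hsucc
    _ ≤ (2 * (i + n + 1)).choose (n + 1) * p ^ (n + 1) * q ^ n *
          ((i + n + 1 + i + 1) * q ^ (2 * i + 1)) := by gcongr
    _ = _ := by ring

theorem half_le_sum_choose_mul_pow {k : ℕ} (hk : Even k) :
    (1 : ℝ) / 2 ≤ ∑ j ∈ range (k + 1) with 2 * j ≤ k,
      (k.choose j : ℝ) * (1 / 2 + 1 / (3 * k)) ^ j * (1 / 2 - 1 / (3 * k)) ^ (k - j) := by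
  obtain ⟨m, rfl⟩ := hk
  rw [← two_mul]
  set t : ℝ := 1 / (3 * ((2 * m : ℕ) : ℝ)) with ht
  set f : ℕ → ℝ := fun j => (2 * m).choose j * (1 / 2 + t) ^ j * (1 / 2 - t) ^ (2 * m - j)
  have hrange : {j ∈ range (2 * m + 1) | 2 * j ≤ 2 * m} = range (m + 1) := by
    ext j; simp only [mem_filter, mem_range]; omega
  have htotal : ∑ j ∈ range (2 * m + 1), f j = 1 := by
    have := add_pow (1 / 2 + t) (1 / 2 - t) (2 * m)
    rw [show 1 / 2 + t + (1 / 2 - t) = 1 by ring, one_pow] at this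
    rw [this]
    exact sum_congr rfl fun j _ => by ring
  have hreflect : ∀ i < m, f (m + 1 + i) ≤ f (m - i) := by
    intro i hi
    have hm : (1 : ℝ) ≤ m := by exact_mod_cast (show 1 ≤ m by omega)
    have ht6 : t * (6 * m) = 1 := by rw [ht]; push_cast; field_simp; ring
    have ht0 : 0 ≤ t := by positivity
    have hq : 0 ≤ 1 / 2 - t := by nlinarith
    exact choose_mul_pow_le_choose_mul_pow_reflect (by positivity) hq hi
      (sub_mul_pow_le_add_succ_mul_pow hq (by linarith) (by nlinarith) hi)
  have hf0 : 0 ≤ f 0 := by simpa [f] using (even_two_mul m).pow_nonneg (1 / 2 - t)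
  rw [hrange]
  linarith [sum_range_le_two_mul_sum_range_of_reflect_le m hf0 hreflect]

theorem MeasureTheory.Measure.pi_smul_dirac_add_smul_dirac {ι α : Type*} [Fintype ι]
    [DecidableEq ι] [MeasurableSpace α] {a b : ℝ≥0∞} (ha : a ≠ ∞) (hb : b ≠ ∞) (x y : α) :
    Measure.pi (fun _ : ι => a • Measure.dirac x + b • Measure.dirac y) =
      ∑ s : Finset ι, (a ^ #s * b ^ #sᶜ) • Measure.dirac (fun i => if i ∈ s then x else y) := by
  have := Measure.smul_finite (Measure.dirac x) ha
  have := Measure.smul_finite (Measure.dirac y) hb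
  refine Measure.pi_eq fun S hS => ?_
  simp only [Measure.coe_add, Measure.coe_smul, Pi.add_apply, Pi.smul_apply, smul_eq_mul,
    Measure.dirac_apply' _ (hS _), Measure.coe_finsetSum, Finset.sum_apply,
    Measure.dirac_apply' _ (MeasurableSet.univ_pi hS)]
  rw [Finset.prod_add, powerset_univ]
  refine Finset.sum_congr rfl fun s _ => ?_
  rw [← Finset.coe_univ, Set.indicator_pi_one_apply, ← prod_mul_prod_compl s, compl_eq_univ_sdiff,
    prod_mul_distrib, prod_mul_distrib, prod_const, prod_const]
  rw [prod_congr rfl fun i hi => congrArg _ (if_pos hi),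
    prod_congr rfl fun i hi => congrArg _ (if_neg (mem_sdiff.1 hi).2)]
  ring

theorem sum_ite_mem_one_neg_one {n : ℕ} (s : Finset (Fin n)) :
    ∑ i, (if i ∈ s then (1 : ℝ) else -1) = 2 * #s - n := by
  have hs : #s ≤ n := by simpa using s.card_le_univ
  rw [sum_ite, filter_mem_eq_inter, filter_notMem_eq_sdiff]
  simp [card_univ_sdiff, hs]
  ring

theorem MeasureTheory.Measure.pi_smul_dirac_one_add_smul_dirac_neg_one_sum_nonpos {n : ℕ}
    {a b : ℝ≥0∞} (ha : a ≠ ∞) (hb : b ≠ ∞) :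
    Measure.pi (fun _ : Fin n => a • Measure.dirac (1 : ℝ) + b • Measure.dirac (-1 : ℝ))
        {y | ∑ i, y i ≤ 0} =
      ∑ j ∈ range (n + 1) with 2 * j ≤ n, (n.choose j : ℝ≥0∞) * a ^ j * b ^ (n - j) := by
  have hmeas : MeasurableSet {y : Fin n → ℝ | ∑ i, y i ≤ 0} :=
    measurableSet_le (by fun_prop) measurable_const
  have hterm : ∀ s : Finset (Fin n), (a ^ #s * b ^ #sᶜ) *
      {y : Fin n → ℝ | ∑ i, y i ≤ 0}.indicator 1 (fun i => if i ∈ s then (1 : ℝ) else -1) =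
      if 2 * #s ≤ n then a ^ #s * b ^ (n - #s) else 0 := by
    intro s
    have hmem : (2 * (#s : ℝ) - n ≤ 0) ↔ 2 * #s ≤ n := by rw [sub_nonpos]; norm_cast
    simp only [Set.indicator_apply, Set.mem_ofPred_eq, sum_ite_mem_one_neg_one, hmem, card_compl,
      Fintype.card_fin]
    split_ifs <;> simp
  rw [Measure.pi_smul_dirac_add_smul_dirac ha hb, Measure.coe_finsetSum, Finset.sum_apply]
  simp only [Measure.smul_apply, Measure.dirac_apply' _ hmeas, smul_eq_mul, hterm]
  rw [← powerset_univ,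
    sum_powerset_apply_card (fun j => if 2 * j ≤ n then a ^ j * b ^ (n - j) else 0),
    card_univ, Fintype.card_fin, sum_filter]
  simp only [nsmul_eq_mul, mul_ite, mul_zero, mul_assoc]

theorem MeasureTheory.integral_smul_dirac_add_smul_dirac {α E : Type*} [MeasurableSpace α]
    [MeasurableSingletonClass α] [NormedAddCommGroup E] [NormedSpace ℝ E] [CompleteSpace E]
    {a b : ℝ≥0∞}
    (ha : a ≠ ∞) (hb : b ≠ ∞) (f : α → E) (x y : α) :
    ∫ t, f t ∂(a • Measure.dirac x + b • Measure.dirac y) = a.toReal • f x + b.toReal • f y := by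
  rw [integral_add_measure ((integrable_dirac enorm_lt_top).smul_measure ha)
    ((integrable_dirac enorm_lt_top).smul_measure hb), integral_smul_measure, integral_smul_measure,
    integral_dirac, integral_dirac]

theorem stmt6_general (k : ℕ) (heven : Even k)
    (μ : Measure ℝ)
    (hμ : μ = ENNReal.ofReal (1 / 2 + 1 / (3 * (k : ℝ))) • Measure.dirac (1 : ℝ)
        + ENNReal.ofReal (1 / 2 - 1 / (3 * (k : ℝ))) • Measure.dirac (-1 : ℝ)) :
    MedianConstraint k μ ∧ ∫ x, x ∂μ = 2 / (3 * (k : ℝ)) := by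
  have hp : 0 ≤ 1 / 2 + 1 / (3 * (k : ℝ)) := by positivity
  have hq : 0 ≤ 1 / 2 - 1 / (3 * (k : ℝ)) := by
    rcases k.eq_zero_or_pos with rfl | hk
    · norm_num
    · have hk : (1 : ℝ) ≤ k := by exact_mod_cast hk
      rw [sub_nonneg, div_le_div_iff₀ (by positivity) (by norm_num)]
      linarith
  subst hμ
  refine ⟨?_, ?_⟩
  · rw [MedianConstraint, Measure.pi_smul_dirac_one_add_smul_dirac_neg_one_sum_nonpos
      ENNReal.ofReal_ne_top ENNReal.ofReal_ne_top]
    calc (1 : ℝ≥0∞) / 2 = ENNReal.ofReal (1 / 2) := by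
          rw [ENNReal.ofReal_div_of_pos two_pos, ENNReal.ofReal_one, ENNReal.ofReal_ofNat]
      _ ≤ ENNReal.ofReal _ := ENNReal.ofReal_le_ofReal (half_le_sum_choose_mul_pow heven)
      _ = _ := by
        rw [ENNReal.ofReal_sum_of_nonneg fun j _ => by positivity]
        refine sum_congr rfl fun j _ => ?_
        rw [ENNReal.ofReal_mul (by positivity), ENNReal.ofReal_mul (by positivity),
          ENNReal.ofReal_natCast, ENNReal.ofReal_pow hp, ENNReal.ofReal_pow hq]
  · rw [integral_smul_dirac_add_smul_dirac ENNReal.ofReal_ne_top ENNReal.ofReal_ne_top,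
      ENNReal.toReal_ofReal hp, ENNReal.toReal_ofReal hq, smul_eq_mul, smul_eq_mul]
    ring

/-- For every even `k ≥ 4`, the distribution taking value `1` with probability
`1/2 + 1/(3k)` and value `-1` with probability `1/2 - 1/(3k)` satisfies the `k`-sample
median constraint and has expectation `2/(3k)`. -/
theorem stmt6 (k : ℕ) (hk : 4 ≤ k) (heven : Even k)
    (μ : Measure ℝ)
    (hμ : μ = ENNReal.ofReal (1 / 2 + 1 / (3 * (k : ℝ))) • Measure.dirac (1 : ℝ)
        + ENNReal.ofReal (1 / 2 - 1 / (3 * (k : ℝ))) • Measure.dirac (-1 : ℝ)) :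
    MedianConstraint k μ ∧ ∫ x, x ∂μ = 2 / (3 * (k : ℝ)) :=
  stmt6_general k heven μ hμ
end

section
/- For every finitely supported probability distribution D on [−1,1] satisfying the 2-sample median constraint, there exists a probability distribution D′ supported on the set {−1, 0, 1} that also satisfies the 2-sample median constraint and has E[D′] ≥ E[D]. -/
/-!
If `P(X₁ + X₂ > 0) ≤ 1/2` for two independent copies of a random variable `X` with values in
`[-1, 1]`, then `E X ≤ √2 - 1`; the distribution putting mass `√2/2` on `1` and the rest on `-1`
attains this bound with `P(X₁ + X₂ > 0) = 1/2` exactly.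

For the bound, write `m, z, n` for the probabilities of `X > 0`, `X = 0`, `X < 0` and `a, b` for
`E X⁺, E X⁻`. On `[-1, 1]²` the indicator of `x + y > 0` dominates a sum of products `f(x) g(y)`,
which integrates to `m (m + z) + z m + 2 (n a - b m)`. What remains is an inequality between real
numbers.
-/

open MeasureTheory

open Set

section Bound

lemma sub_le_sqrt_two_sub_one {m z n a b : ℝ} (hz : 0 ≤ z) (hmzn : m + z + n = 1) (ham : a ≤ m)
    (hb : 0 ≤ b) (hbn : b ≤ n)
    (h : m * (m + z) + z * m + 2 * (n * a - b * m) ≤ 1 / 2) :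
    a - b ≤ √2 - 1 := by
  set s := √2
  have hs : s ^ 2 = 2 := Real.sq_sqrt zero_le_two
  have hs1 : 11 / 8 ≤ s := by nlinarith [Real.sqrt_nonneg 2]
  have hs2 : s ≤ 3 / 2 := by nlinarith
  have hz' : z = 1 - m - n := by linarith
  subst hz'
  -- Equality holds at `a = m = s / 2`, `z = 0`, `b = n = 1 - s / 2`.
  rcases le_or_gt m (1 / 2) with h₁ | h₁
  · nlinarith [mul_nonneg (sub_nonneg.2 ham) hz, mul_nonneg hb (by linarith : (0 : ℝ) ≤ 1 - 2 * m),
      sq_nonneg (m + 1 - s)]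
  rcases le_or_gt m (s / 2) with h₂ | h₂
  · nlinarith [mul_nonneg (sub_nonneg.2 ham) (by linarith : (0 : ℝ) ≤ m - n),
      mul_nonneg (by linarith : (0 : ℝ) ≤ s / 2 - m) (by linarith : (0 : ℝ) ≤ m - s / 6)]
  · nlinarith [mul_nonneg (sub_nonneg.2 ham) hz,
      mul_nonneg (by linarith : (0 : ℝ) ≤ 2 * m - 1) (by linarith : (0 : ℝ) ≤ 1 - m - b),
      mul_nonneg (by linarith : (0 : ℝ) ≤ 3 * s - 4) (by linarith : (0 : ℝ) ≤ m - s / 2),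
      sq_nonneg (m - s / 2)]

/-- On `x < 0 < y` the left side is `x + y`, which is at most `1` because `y ≤ 1`. -/
lemma indicator_sum_pos_ge {x y : ℝ} (hx : x ≤ 1) (hy : y ≤ 1) :
    (Ioi 0).indicator 1 x * (Ici 0).indicator 1 y
        + ({0} : Set ℝ).indicator 1 x * (Ioi 0).indicator 1 y
        + ((Iio 0).indicator 1 x * y⁺ - x⁻ * (Ioi 0).indicator 1 y)
        + (x⁺ * (Iio 0).indicator 1 y - (Ioi 0).indicator 1 x * y⁻)
      ≤ {q : ℝ × ℝ | 0 < q.1 + q.2}.indicator 1 (x, y) := by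
  simp only [indicator_apply, mem_Ioi, mem_Iio, mem_Ici, mem_singleton_iff, mem_ofPred_eq,
    Pi.one_apply, posPart_def, negPart_def, max_def]
  rcases lt_trichotomy x 0 with hx0 | hx0 | hx0 <;> rcases lt_trichotomy y 0 with hy0 | hy0 | hy0 <;>
    simp (disch := linarith) only [if_pos, if_neg] <;> split_ifs <;> linarith

lemma posPart_le_indicator_Ioi {x : ℝ} (hx : x ≤ 1) : x⁺ ≤ (Ioi 0).indicator 1 x := by
  rcases le_or_gt x 0 with h | h
  · rw [posPart_eq_zero.2 h]
    exact indicator_nonneg (fun _ _ => zero_le_one) x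
  · rwa [posPart_eq_self.2 h.le, indicator_of_mem (mem_Ioi.2 h), Pi.one_apply]

lemma negPart_le_indicator_Iio {x : ℝ} (hx : -1 ≤ x) : x⁻ ≤ (Iio 0).indicator 1 x := by
  rcases le_or_gt 0 x with h | h
  · rw [negPart_eq_zero.2 h]
    exact indicator_nonneg (fun _ _ => zero_le_one) x
  · rw [negPart_eq_neg.2 h.le, indicator_of_mem (mem_Iio.2 h), Pi.one_apply]
    linarith

variable {μ : Measure ℝ} [IsProbabilityMeasure μ]

lemma medianConstraint_two_iff :
    MedianConstraint 2 μ ↔ (μ.prod μ).real {q : ℝ × ℝ | 0 < q.1 + q.2} ≤ 1 / 2 := by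
  have hS : MeasurableSet {q : ℝ × ℝ | 0 < q.1 + q.2} :=
    measurableSet_lt measurable_const (by fun_prop)
  have hpi : Measure.pi (fun _ : Fin 2 => μ) {y | ∑ i, y i ≤ 0}
      = (μ.prod μ) {q : ℝ × ℝ | 0 < q.1 + q.2}ᶜ := by
    rw [← (measurePreserving_piFinTwo fun _ => μ).measure_preimage hS.compl.nullMeasurableSet]
    congr 1 with y
    simp [Fin.sum_univ_two]
  rw [MedianConstraint, hpi, ← ENNReal.toReal_le_toReal (by norm_num) (measure_ne_top _ _),
    ← measureReal_def, probReal_compl_eq_one_sub hS, le_sub_comm]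
  norm_num

lemma measureReal_sum_pos_ge (hμ : ∀ᵐ x ∂μ, x ∈ Icc (-1 : ℝ) 1) :
    μ.real (Ioi 0) * μ.real (Ici 0) + μ.real {0} * μ.real (Ioi 0)
        + 2 * (μ.real (Iio 0) * ∫ x, x⁺ ∂μ - (∫ x, x⁻ ∂μ) * μ.real (Ioi 0))
      ≤ (μ.prod μ).real {q : ℝ × ℝ | 0 < q.1 + q.2} := by
  have hS : MeasurableSet {q : ℝ × ℝ | 0 < q.1 + q.2} :=
    measurableSet_lt measurable_const (by fun_prop)
  have h1 {s : Set ℝ} (hs : MeasurableSet s) : Integrable (s.indicator 1) μ :=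
    (integrable_const (1 : ℝ)).indicator hs
  have hpos := h1 (measurableSet_Ioi (a := 0))
  have hnonneg := h1 (measurableSet_Ici (a := 0))
  have hzero := h1 (measurableSet_singleton 0)
  have hneg := h1 (measurableSet_Iio (a := 0))
  have hid : Integrable id μ := .of_mem_Icc (-1) 1 measurable_id.aemeasurable hμ
  have hposPart : Integrable posPart μ := hid.pos_part
  have hnegPart : Integrable negPart μ := hid.neg_part
  have hle : ∀ᵐ q ∂(μ.prod μ), q.1 ≤ 1 ∧ q.2 ≤ 1 :=
    (Measure.quasiMeasurePreserving_fst.ae (hμ.mono fun _ h => h.2)).and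
      (Measure.quasiMeasurePreserving_snd.ae (hμ.mono fun _ h => h.2))
  rw [← integral_indicator_one hS]
  refine le_of_eq_of_le ?_ (integral_mono_ae (by fun_prop) ((integrable_const (1 : ℝ)).indicator hS)
    (hle.mono fun q hq => indicator_sum_pos_ge hq.1 hq.2))
  rw [integral_add (by fun_prop) (by fun_prop), integral_add (by fun_prop) (by fun_prop),
    integral_add (by fun_prop) (by fun_prop), integral_sub (by fun_prop) (by fun_prop),
    integral_sub (by fun_prop) (by fun_prop)]
  simp only [integral_prod_mul, integral_indicator_one measurableSet_Ioi,
    integral_indicator_one measurableSet_Iio, integral_indicator_one measurableSet_Ici,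
    integral_indicator_one (measurableSet_singleton _)]
  ring

theorem integral_le_sqrt_two_sub_one (hμ : ∀ᵐ x ∂μ, x ∈ Icc (-1 : ℝ) 1)
    (hmed : (μ.prod μ).real {q : ℝ × ℝ | 0 < q.1 + q.2} ≤ 1 / 2) :
    ∫ x, x ∂μ ≤ √2 - 1 := by
  have hid : Integrable id μ := .of_mem_Icc (-1) 1 measurable_id.aemeasurable hμ
  have hposPart : Integrable (fun x : ℝ => x⁺) μ := hid.pos_part
  have hnegPart : Integrable (fun x : ℝ => x⁻) μ := hid.neg_part
  have hnonneg : μ.real (Ici 0) = μ.real (Ioi 0) + μ.real {0} := by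
    rw [← Ioi_union_left, measureReal_union (by simp) (measurableSet_singleton 0)]
  have hneg : μ.real (Iio 0) = 1 - μ.real (Ici 0) := by
    rw [← compl_Ici, probReal_compl_eq_one_sub measurableSet_Ici]
  have ha : ∫ x, x⁺ ∂μ ≤ μ.real (Ioi 0) := by
    rw [← integral_indicator_one measurableSet_Ioi]
    exact integral_mono_ae hposPart ((integrable_const (1 : ℝ)).indicator measurableSet_Ioi)
      (hμ.mono fun x hx => posPart_le_indicator_Ioi hx.2)
  have hb : ∫ x, x⁻ ∂μ ≤ μ.real (Iio 0) := by
    rw [← integral_indicator_one measurableSet_Iio]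
    exact integral_mono_ae hnegPart ((integrable_const (1 : ℝ)).indicator measurableSet_Iio)
      (hμ.mono fun x hx => negPart_le_indicator_Iio hx.1)
  have hsplit : ∫ x, x ∂μ = ∫ x, x⁺ ∂μ - ∫ x, x⁻ ∂μ := by
    rw [← integral_sub hposPart hnegPart]
    simp only [posPart_sub_negPart]
  rw [hsplit]
  refine sub_le_sqrt_two_sub_one (z := μ.real {0}) measureReal_nonneg (by linarith) ha
    (integral_nonneg negPart_nonneg) hb ?_
  rw [← hnonneg]
  exact (measureReal_sum_pos_ge hμ).trans hmed

end Bound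

section TwoPoint

noncomputable def twoPoint (p : ℝ) : Measure ℝ :=
  ENNReal.ofReal p • Measure.dirac 1 + ENNReal.ofReal (1 - p) • Measure.dirac (-1)

variable {p : ℝ}

instance : IsFiniteMeasure (twoPoint p) := ⟨by simp [twoPoint]⟩

lemma isProbabilityMeasure_twoPoint (hp0 : 0 ≤ p) (hp1 : p ≤ 1) :
    IsProbabilityMeasure (twoPoint p) :=
  ⟨by simp [twoPoint, ← ENNReal.ofReal_add hp0 (sub_nonneg.2 hp1)]⟩

lemma twoPoint_compl_eq_zero : twoPoint p {-1, 0, 1}ᶜ = 0 := by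
  simp [twoPoint]

lemma integral_id_twoPoint (hp0 : 0 ≤ p) (hp1 : p ≤ 1) : ∫ x, x ∂twoPoint p = 2 * p - 1 := by
  rw [twoPoint, integral_add_measure, integral_smul_measure, integral_smul_measure,
    integral_dirac, integral_dirac, ENNReal.toReal_ofReal hp0,
    ENNReal.toReal_ofReal (sub_nonneg.2 hp1)]
  · simp only [smul_eq_mul]
    ring
  all_goals exact (integrable_dirac enorm_lt_top).smul_measure ENNReal.ofReal_ne_top

lemma measureReal_twoPoint_prod_sum_pos (hp0 : 0 ≤ p) :
    ((twoPoint p).prod (twoPoint p)).real {q : ℝ × ℝ | 0 < q.1 + q.2} = p ^ 2 := by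
  rw [measureReal_def, Measure.prod_apply (measurableSet_lt measurable_const (by fun_prop))]
  simp [twoPoint, lintegral_add_measure, preimage, ENNReal.toReal_ofReal hp0, sq]

end TwoPoint

theorem stmt7_general (μ : Measure ℝ) [IsProbabilityMeasure μ]
    (hsupp : μ (Set.Icc (-1 : ℝ) 1)ᶜ = 0)
    (hmed : MedianConstraint 2 μ) :
    ∃ ν : Measure ℝ, IsProbabilityMeasure ν ∧ ν ({-1, 0, 1} : Set ℝ)ᶜ = 0 ∧
      MedianConstraint 2 ν ∧ ∫ x, x ∂μ ≤ ∫ x, x ∂ν := by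
  set p := √2 / 2 with hp
  have hp0 : 0 ≤ p := by positivity
  have hp2 : p ^ 2 = 1 / 2 := by
    rw [div_pow, Real.sq_sqrt zero_le_two]
    norm_num
  have hp1 : p ≤ 1 := by nlinarith
  have hν := isProbabilityMeasure_twoPoint hp0 hp1
  refine ⟨twoPoint p, hν, twoPoint_compl_eq_zero, ?_, ?_⟩
  · rw [medianConstraint_two_iff, measureReal_twoPoint_prod_sum_pos hp0, hp2]
  · rw [integral_id_twoPoint hp0 hp1]
    linarith [integral_le_sqrt_two_sub_one (mem_ae_iff.2 hsupp) (medianConstraint_two_iff.1 hmed)]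

/-- For every finitely supported probability distribution `μ` on `[-1,1]`
satisfying the 2-sample median constraint, there is a probability distribution `ν`
supported on `{-1, 0, 1}` that also satisfies the 2-sample median constraint and has
expectation at least that of `μ`. -/
theorem stmt7 (μ : Measure ℝ) [IsProbabilityMeasure μ]
    (hsupp : μ (Set.Icc (-1 : ℝ) 1)ᶜ = 0)
    (hfin : ∃ s : Finset ℝ, μ ((s : Set ℝ))ᶜ = 0)
    (hmed : MedianConstraint 2 μ) :
    ∃ ν : Measure ℝ, IsProbabilityMeasure ν ∧ ν ({-1, 0, 1} : Set ℝ)ᶜ = 0 ∧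
      MedianConstraint 2 ν ∧ ∫ x, x ∂μ ≤ ∫ x, x ∂ν :=
  stmt7_general μ hsupp hmed
end

section
/- For all real numbers p, q with p ≥ 0, q ≥ 0, p + q ≤ 1, if (p+q)² + 2p(1−p−q) ≥ 1/2, then 1 − 2p − q ≤ √2 − 1. -/
/-- For all `p, q ≥ 0` with `p + q ≤ 1`, if
`(p+q)² + 2p(1-p-q) ≥ 1/2`, then `1 - 2p - q ≤ √2 - 1`. -/
theorem stmt8 (p q : ℝ) (hp : 0 ≤ p) (hq : 0 ≤ q) (hpq : p + q ≤ 1)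
    (hcon : (p + q) ^ 2 + 2 * p * (1 - p - q) ≥ 1 / 2) :
    1 - 2 * p - q ≤ Real.sqrt 2 - 1 := by
  have h2 : Real.sqrt 2 ^ 2 = 2 := Real.sq_sqrt (by norm_num)
  have h1 : (1:ℝ) ≤ Real.sqrt 2 := by
    nlinarith [Real.sqrt_nonneg 2]
  nlinarith [sq_nonneg (1 - 2*p - q - (Real.sqrt 2 - 1)), sq_nonneg (p+q), Real.sqrt_nonneg 2, sq_nonneg (Real.sqrt 2 - 1 - q), mul_nonneg hp hq]
end

section
/- Every probability distribution D on [−1,1] satisfying the 2-sample median constraint has E[D] ≤ √2 − 1; that is, θ_2 ≤ √2 − 1. -/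
/-!
Write `p(t) = μ[t, ∞)` and `q(t) = μ(-∞, -t]`, so that `E[X] = ∫₀¹ (p(t) - q(t)) dt` by the
layer-cake formula. For `t > 0`, two samples with `Y₁ ≥ t, Y₂ > -t` or `Y₁ > -t, Y₂ ≥ t` have a
positive sum; by inclusion–exclusion this event has probability `2p(1 - q) - p²`, which the median
constraint bounds by `1/2`. Together with `p + q ≤ 1` this forces `p - q ≤ √2 - 1` pointwise.
-/

open MeasureTheory

open Set

-- Equality at `p = 1/√2`, `q = 1 - 1/√2`: the law with these masses at `±1` attains `θ₂ = √2 - 1`.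
lemma sub_le_sqrt_two_sub_one_s9 {p q : ℝ} (hp : 0 ≤ p) (hq : 0 ≤ q) (hpq : p + q ≤ 1)
    (h : 2 * p * (1 - q) - p ^ 2 ≤ 1 / 2) : p - q ≤ √2 - 1 := by
  have hs : √2 ^ 2 = 2 := Real.sq_sqrt (by norm_num)
  have hs1 : 1 ≤ √2 := Real.one_le_sqrt.mpr (by norm_num)
  rcases le_or_gt p (√2 / 6) with h1 | h1
  · nlinarith
  rcases le_or_gt (√2 / 2) p with h2 | h2
  · nlinarith
  · nlinarith [mul_nonneg hp hq, sq_nonneg (p - √2 / 2), sq_nonneg (p - √2 / 6)]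

section LayerCake

variable {α : Type*} [MeasurableSpace α] {μ : Measure α}

lemma integrableOn_Ioc_measureReal_le [IsFiniteMeasure μ] (f : α → ℝ) (M : ℝ) :
    IntegrableOn (fun t ↦ μ.real {x | t ≤ f x}) (Ioc 0 M) := by
  have hanti : Antitone fun t ↦ μ.real {x | t ≤ f x} := fun _ _ hst ↦
    measureReal_mono fun _ hx ↦ hst.trans hx
  exact (hanti.locallyIntegrable.integrableOn_isCompact isCompact_Icc).mono_set Ioc_subset_Icc_self

lemma integrableOn_Ioc_measureReal_le_neg [IsFiniteMeasure μ] (f : α → ℝ) (M : ℝ) :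
    IntegrableOn (fun t ↦ μ.real {x | f x ≤ -t}) (Ioc 0 M) := by
  simpa only [le_neg] using integrableOn_Ioc_measureReal_le (μ := μ) (fun x ↦ -f x) M

lemma integral_toNNReal_eq_integral_Ioc_measureReal_le {f : α → ℝ} {M : ℝ}
    (hf : Integrable f μ) (hbdd : ∀ᵐ x ∂μ, |f x| ≤ M) :
    ∫ x, ((f x).toNNReal : ℝ) ∂μ = ∫ t in Ioc 0 M, μ.real {x | t ≤ f x} := by
  rw [hf.real_toNNReal.integral_eq_integral_Ioc_meas_le (ae_of_all _ fun _ ↦ NNReal.coe_nonneg _)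
    (hbdd.mono fun x hx ↦ by
      simpa [Real.coe_toNNReal'] using ⟨(le_abs_self _).trans hx, (abs_nonneg _).trans hx⟩)]
  refine setIntegral_congr_fun measurableSet_Ioc fun t ht ↦ ?_
  simp [Real.coe_toNNReal', ht.1.not_ge]

theorem integral_eq_integral_Ioc_measureReal_sub [IsFiniteMeasure μ] {f : α → ℝ} {M : ℝ}
    (hf : AEStronglyMeasurable f μ) (hbdd : ∀ᵐ x ∂μ, |f x| ≤ M) :
    ∫ x, f x ∂μ = ∫ t in Ioc 0 M, (μ.real {x | t ≤ f x} - μ.real {x | f x ≤ -t}) := by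
  have hint : Integrable f μ := .of_bound hf M hbdd
  rw [integral_eq_integral_pos_part_sub_integral_neg_part hint,
    integral_toNNReal_eq_integral_Ioc_measureReal_le hint hbdd,
    integral_toNNReal_eq_integral_Ioc_measureReal_le (f := fun x ↦ -f x) hint.neg
      (by simpa only [abs_neg] using hbdd),
    integral_sub (integrableOn_Ioc_measureReal_le f M) (integrableOn_Ioc_measureReal_le_neg f M)]
  simp only [le_neg]

end LayerCake

lemma measureReal_prod_union_prod {α : Type*} [MeasurableSpace α] (μ : Measure α)
    [IsFiniteMeasure μ] {s r : Set α} (hs : MeasurableSet s) (hr : MeasurableSet r)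
    (hsr : s ⊆ r) :
    (μ.prod μ).real (s ×ˢ r ∪ r ×ˢ s) = 2 * μ.real s * μ.real r - μ.real s ^ 2 := by
  have h := measureReal_union_add_inter (μ := μ.prod μ) (s := s ×ˢ r) (hr.prod hs)
  rw [prod_inter_prod, inter_eq_left.mpr hsr, inter_eq_right.mpr hsr] at h
  simp only [measureReal_prod_prod] at h
  linarith

namespace MedianConstraint

variable {μ : Measure ℝ} [IsProbabilityMeasure μ]

lemma measureReal_prod_add_pos_le (hmed : MedianConstraint 2 μ) :
    (μ.prod μ).real {z | 0 < z.1 + z.2} ≤ 1 / 2 := by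
  have hS : MeasurableSet {z : ℝ × ℝ | z.1 + z.2 ≤ 0} := measurableSet_le (by fun_prop) (by fun_prop)
  have hle : 1 / 2 ≤ (μ.prod μ).real {z | z.1 + z.2 ≤ 0} := by
    rw [← (measurePreserving_finTwoArrow μ).measureReal_preimage hS.nullMeasurableSet]
    have hpre : MeasurableEquiv.finTwoArrow ⁻¹' {z : ℝ × ℝ | z.1 + z.2 ≤ 0} =
        {y : Fin 2 → ℝ | ∑ i, y i ≤ 0} := by
      ext y; simp [Fin.sum_univ_two]
    rw [hpre]
    simpa [measureReal_def] using ENNReal.toReal_mono (measure_ne_top _ _) hmed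
  have hcompl : {z : ℝ × ℝ | 0 < z.1 + z.2} = {z | z.1 + z.2 ≤ 0}ᶜ := by ext; simp
  rw [hcompl, probReal_compl_eq_one_sub hS]
  linarith

lemma two_mul_sub_sq_le (hmed : MedianConstraint 2 μ) {t : ℝ} (ht : 0 < t) :
    2 * μ.real (Ici t) * (1 - μ.real (Iic (-t))) - μ.real (Ici t) ^ 2 ≤ 1 / 2 := by
  rw [← probReal_compl_eq_one_sub measurableSet_Iic, compl_Iic,
    ← measureReal_prod_union_prod μ measurableSet_Ici measurableSet_Ioi
      (Ici_subset_Ioi.mpr (by linarith))]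
  refine (measureReal_mono ?_).trans hmed.measureReal_prod_add_pos_le
  rintro ⟨y₁, y₂⟩ (⟨h₁, h₂⟩ | ⟨h₁, h₂⟩) <;> simp only [mem_Ici, mem_Ioi] at h₁ h₂ <;>
    simp only [mem_ofPred_eq] <;> linarith

lemma measureReal_Ici_sub_measureReal_Iic_le (hmed : MedianConstraint 2 μ) {t : ℝ} (ht : 0 < t) :
    μ.real (Ici t) - μ.real (Iic (-t)) ≤ √2 - 1 := by
  have hdisj : Disjoint (Ici t) (Iic (-t)) := Ici_disjoint_Iic.mpr (by linarith)
  refine sub_le_sqrt_two_sub_one_s9 measureReal_nonneg measureReal_nonneg ?_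
    (hmed.two_mul_sub_sq_le ht)
  rw [← measureReal_union hdisj measurableSet_Iic]
  exact measureReal_le_one

end MedianConstraint

/-- Every probability distribution on `[-1,1]` satisfying the 2-sample median
constraint has expectation at most `√2 - 1`; that is, `θ_2 ≤ √2 - 1`. -/
theorem stmt9 (μ : Measure ℝ) [IsProbabilityMeasure μ]
    (hsupp : μ (Set.Icc (-1 : ℝ) 1)ᶜ = 0)
    (hmed : MedianConstraint 2 μ) :
    ∫ x, x ∂μ ≤ Real.sqrt 2 - 1 := by
  have hmem : ∀ᵐ x ∂μ, x ∈ Icc (-1 : ℝ) 1 := mem_ae_iff.mpr hsupp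
  rw [integral_eq_integral_Ioc_measureReal_sub (f := fun x ↦ x) aestronglyMeasurable_id
    (hmem.mono fun _ hx ↦ abs_le.mpr hx)]
  calc _ ≤ ∫ _ in Ioc (0 : ℝ) 1, (√2 - 1) :=
        setIntegral_mono_on ((integrableOn_Ioc_measureReal_le _ _).sub
          (integrableOn_Ioc_measureReal_le_neg _ _)) (integrableOn_const (by simp))
          measurableSet_Ioc fun t ht ↦ hmed.measureReal_Ici_sub_measureReal_Iic_le ht.1
    _ = √2 - 1 := by simp
end

section
/- Let β = 2 + √2 and A = (1 + 2/β)(√2 − 1). For all real numbers B, p, q, r, s, t with 0 ≤ B ≤ 1, p, q, r, s, t ≥ 0, p + q + r + s + t = 1, and (p+q)² + 2p(r+s) + 2qr ≤ 1/2, the following holds: A + p((2/β)(B+1) − 1) + q((2/β)(1−B) − 1) − r − s((2/β)(1−B) + 1) − t((2/β)(B+1) + 2B + 1) ≤ 0. -/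
/-- Auxiliary lemma for the `B = 1` endpoint. -/
lemma aux_case1 (s2 x y : ℝ) (h2 : s2 ^ 2 = 2) (h1 : 1 < s2) (h15 : s2 < 3/2)
    (hx : 0 ≤ x) (hy : 0 ≤ y) (hxy : x + y ≤ 1)
    (hcon : 2*x - x^2 - 2*x*y ≤ 1/2) :
    2*x*(2 - s2) - (6 - 2*s2)*y ≤ 6 - 4*s2 := by
  have hx2 : x^2 ≤ 1/2 := by nlinarith [mul_nonneg hx (by linarith : (0:ℝ) ≤ 1 - x - y)]
  have hxs : 2*x ≤ s2 := by nlinarith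
  rcases le_or_gt x ((2 - s2)/2) with h | h
  · nlinarith
  · nlinarith [mul_nonneg hx hy, sq_nonneg (2*x - (2 - s2)),
      mul_nonneg (by linarith : (0:ℝ) ≤ 2*x - (2 - s2)) (by linarith : (0:ℝ) ≤ s2 - 2*x),
      mul_nonneg (by linarith : (0:ℝ) ≤ x) (by linarith : (0:ℝ) ≤ 1/2 - (2*x - x^2 - 2*x*y))]

/-- Auxiliary lemma for the `B = 0` endpoint. -/
lemma aux_case0 (s2 x y : ℝ) (h2 : s2 ^ 2 = 2) (h1 : 1 < s2) (h15 : s2 < 3/2)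
    (hx : 0 ≤ x) (hy : 0 ≤ y) (hxy : x + y ≤ 1)
    (hcon : 2*x - x^2 - 2*x*y ≤ 1/2) :
    (2 - s2)*x - (2 - s2)*y ≤ 6 - 4*s2 := by
  have hx2 : x^2 ≤ 1/2 := by nlinarith [mul_nonneg hx (by linarith : (0:ℝ) ≤ 1 - x - y)]
  have hxs : 2*x ≤ s2 := by nlinarith
  rcases le_or_gt x (2 - s2) with h | h
  · nlinarith
  · nlinarith [mul_nonneg hx hy,
      mul_nonneg (by linarith : (0:ℝ) ≤ x - (2 - s2)) (by linarith : (0:ℝ) ≤ s2 - 2*x),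
      mul_nonneg (by linarith : (0:ℝ) ≤ x) (by linarith : (0:ℝ) ≤ 1/2 - (2*x - x^2 - 2*x*y))]

/-- Case 1, `0 ≤ B ≤ 1`: with `β = 2 + √2` and `A = (1 + 2/β)(√2 - 1)`,
for all `B, p, q, r, s, t` with `0 ≤ B ≤ 1`, nonnegative probabilities summing to 1, and
`(p+q)² + 2p(r+s) + 2qr ≤ 1/2`, the objective is nonpositive. -/
theorem stmt13 (β A B p q r s t : ℝ)
    (hβ : β = 2 + Real.sqrt 2) (hA : A = (1 + 2 / β) * (Real.sqrt 2 - 1))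
    (hB0 : 0 ≤ B) (hB1 : B ≤ 1)
    (hp : 0 ≤ p) (hq : 0 ≤ q) (hr : 0 ≤ r) (hs : 0 ≤ s) (ht : 0 ≤ t)
    (hsum : p + q + r + s + t = 1)
    (hcon : (p + q) ^ 2 + 2 * p * (r + s) + 2 * q * r ≤ 1 / 2) :
    A + p * (2 / β * (B + 1) - 1) + q * (2 / β * (1 - B) - 1)
      - r - s * (2 / β * (1 - B) + 1) - t * (2 / β * (B + 1) + 2 * B + 1) ≤ 0 := by
  set s2 := Real.sqrt 2 with hs2def
  have h2 : s2 ^ 2 = 2 := Real.sq_sqrt (by norm_num)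
  have h1 : 1 < s2 := by nlinarith [Real.sqrt_nonneg 2]
  have h15 : s2 < 3/2 := by nlinarith [Real.sqrt_nonneg 2]
  have hβ0 : β ≠ 0 := by rw [hβ]; positivity
  have hc : 2 / β = 2 - s2 := by
    rw [hβ, div_eq_iff (by positivity)]; nlinarith
  have hA' : A = 4*s2 - 5 := by rw [hA, hc]; ring_nf; nlinarith
  rw [hc, hA']
  -- B = 1 endpoint
  have hObj1 : (4*s2 - 5) + 2*p*(2 - s2) - 1 - (6 - 2*s2)*t ≤ 0 := by
    have key := aux_case1 s2 p t h2 h1 h15 hp ht (by linarith)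
      (by nlinarith [sq_nonneg q, mul_nonneg hq hr])
    linarith
  -- B = 0 endpoint
  have hObj0 : (4*s2 - 5) + (2 - s2)*(p + q) - 1 - (2 - s2)*(s + t) ≤ 0 := by
    have key := aux_case0 s2 (p + q) (s + t) h2 h1 h15 (by linarith) (by linarith)
      (by linarith) (by nlinarith [mul_nonneg hp hs])
    linarith
  nlinarith [mul_nonneg hB0 (by linarith : (0:ℝ) ≤ -((4*s2 - 5) + 2*p*(2 - s2) - 1 - (6 - 2*s2)*t)),
    mul_nonneg (by linarith : (0:ℝ) ≤ 1 - B) (by linarith : (0:ℝ) ≤ -((4*s2 - 5) + (2 - s2)*(p + q) - 1 - (2 - s2)*(s + t)))]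
end

section
/- Let β = 2 + √2 and A = (1 + 2/β)(√2 − 1). For all real numbers B, p, q, r, s, t with 1 ≤ B ≤ 100, p, q, r, s, t ≥ 0, p + q + r + s + t = 1, and (p+q)² + 2p(r+s) + 2qr ≤ 1/2, the following holds: A + p((2/β)(B+1) − 1) + q((2/β)(B−1) − 1) − rB − s((2/β)(B−1) + 2B − 1) − t((2/β)(B+1) + 2B + 1) ≤ 0. -/
set_option maxHeartbeats 1000000


/-- Case 2, `1 ≤ B ≤ 100`: with `β = 2 + √2` and `A = (1 + 2/β)(√2 - 1)`,
for all `B, p, q, r, s, t` with `1 ≤ B ≤ 100`, nonnegative probabilities summing to 1, and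
`(p+q)² + 2p(r+s) + 2qr ≤ 1/2`, the objective is nonpositive. -/
theorem stmt14 (β A B p q r s t : ℝ)
    (hβ : β = 2 + Real.sqrt 2) (hA : A = (1 + 2 / β) * (Real.sqrt 2 - 1))
    (hB1 : 1 ≤ B) (hB100 : B ≤ 100)
    (hp : 0 ≤ p) (hq : 0 ≤ q) (hr : 0 ≤ r) (hs : 0 ≤ s) (ht : 0 ≤ t)
    (hsum : p + q + r + s + t = 1)
    (hcon : (p + q) ^ 2 + 2 * p * (r + s) + 2 * q * r ≤ 1 / 2) :
    A + p * (2 / β * (B + 1) - 1) + q * (2 / β * (B - 1) - 1)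
      - r * B - s * (2 / β * (B - 1) + 2 * B - 1)
      - t * (2 / β * (B + 1) + 2 * B + 1) ≤ 0 := by
  obtain ⟨w, hw⟩ : ∃ x : ℝ, Real.sqrt 2 = x := ⟨_, rfl⟩
  have h2 : w ^ 2 = 2 := by rw [← hw]; exact Real.sq_sqrt (by norm_num)
  have hw0 : 0 ≤ w := by rw [← hw]; exact Real.sqrt_nonneg 2
  rw [hw] at hβ hA
  have hw1 : 1.414 ≤ w := by nlinarith
  have hw15 : w ≤ 1.415 := by nlinarith
  have hβpos : (0:ℝ) < β := by rw [hβ]; linarith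
  have hc : 2 / β = 2 - w := by
    rw [hβ, div_eq_iff (by linarith)]; linear_combination h2
  have hA' : A = 4*w - 5 := by rw [hA, hc]; linear_combination -h2
  rw [hA', hc]
  have e3 : w^3 = 2*w := by rw [pow_succ, h2]
  -- basic consequences of the constraint
  have hcon1 : (p+q)^2 + 2*(p+q)*r ≤ 1/2 := by nlinarith [mul_nonneg hp hs]
  have hu : p + q ≤ w/2 := by
    nlinarith [hcon1, mul_nonneg (add_nonneg hp hq) hr, sq_nonneg (p+q-w/2)]
  have hpw : p ≤ w/2 := by
    nlinarith [mul_nonneg hp hq, mul_nonneg hq hr, sq_nonneg q,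
      mul_nonneg hp hr, mul_nonneg hp hs, sq_nonneg (p-w/2)]
  -- Step 1 : the coefficient of B is nonpositive
  have hK : (2-w)*(p+q) - r - (4-w)*(s+t) ≤ 0 := by
    rcases le_or_gt (p+q) ((3+w)/7) with h | h
    · nlinarith [mul_nonneg (by linarith : (0:ℝ) ≤ 2-w) (by linarith : 0 ≤ (3+w)/7 - (p+q)),
        mul_nonneg (by linarith : (0:ℝ) ≤ 3-w) (add_nonneg hs ht)]
    · have hupos : (0:ℝ) < p+q := by linarith
      have e2u : w^2*(p+q) = 2*(p+q) := by rw [h2]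
      have hQ : 3*(3-w)*(p+q)^2 - 2*(4-w)*(p+q) + (3-w)/2 ≤ 8-6*w := by
        linarith [mul_nonneg (mul_nonneg (by linarith : (0:ℝ) ≤ 3-w)
            (by linarith : 0 ≤ (p+q) - (3+w)/7)) (by linarith : 0 ≤ w/2 - (p+q)),
          mul_nonneg (by linarith : (0:ℝ) ≤ (13*w-16)/2) (by linarith : 0 ≤ w/2 - (p+q)),
          h2, e2u, e3]
      have hst2 : (p+q)*(s+t) = (p+q)*(1-(p+q)-r) := by
        have hx : s + t = 1 - (p+q) - r := by linarith
        rw [hx]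
      have hst2w : w*((p+q)*(s+t)) = w*((p+q)*(1-(p+q)-r)) := by rw [hst2]
      have h2uK : 2*(p+q)*((2-w)*(p+q) - r - (4-w)*(s+t))
          ≤ 3*(3-w)*(p+q)^2 - 2*(4-w)*(p+q) + (3-w)/2 := by
        linarith [mul_nonneg (by linarith : (0:ℝ) ≤ 3-w)
          (by linarith : 0 ≤ 1/2 - (p+q)^2 - 2*(p+q)*r), hst2, hst2w]
      nlinarith [h2uK, hQ, hupos, hw1]
  -- Step 2 : the value at B = 1 is nonpositive
  have hqrs : p*(q+r+s) = p*(1-p-t) := by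
    have hx : q + r + s = 1 - p - t := by linarith
    rw [hx]
  have hconp : 2*p - p^2 - 2*p*t ≤ 1/2 := by
    nlinarith [sq_nonneg q, mul_nonneg hq hr, hqrs]
  have hG : (4-2*w)*p - (6-2*w)*t ≤ 6-4*w := by
    rcases le_or_gt p ((2-w)/2) with h | h
    · nlinarith [mul_nonneg (by linarith : (0:ℝ) ≤ 4-2*w) (by linarith : 0 ≤ (2-w)/2 - p),
        mul_nonneg (by linarith : (0:ℝ) ≤ 6-2*w) ht, h2]
    · have hppos : (0:ℝ) < p := by linarith
      have h20 : (0:ℝ) < 20-13*w := by linarith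
      have hF : 0 ≤ (3-w) - (20-13*w)*p := by
        nlinarith [mul_nonneg (by linarith : (0:ℝ) ≤ 20-13*w) (by linarith : 0 ≤ w/2 - p), h2]
      have hS : 0 ≤ 1/2 - 2*p + p^2 + 2*p*t := by linarith
      have hPF : 0 ≤ (p - (2-w)/2) * ((3-w) - (20-13*w)*p) :=
        mul_nonneg (by linarith) hF
      have e2p : w^2*p = 2*p := by rw [h2]
      have e2p2 : w^2*p^2 = 2*p^2 := by rw [h2]
      have e2pt : w^2*(p*t) = 2*(p*t) := by rw [h2]
      have key_id : (20-13*w) * (p * (6-4*w - (4-2*w)*p + (6-2*w)*t))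
          = (86-59*w)*(1/2 - 2*p + p^2 + 2*p*t)
            + (7-3*w)*((p - (2-w)/2) * ((3-w) - (20-13*w)*p)) := by
        linear_combination (-(3/2)*w + (39/2)*w*p - (131/2)*p + 13*p^2 + 26*p*t + 11) * h2
      have key20 : 0 ≤ (20-13*w) * (p * (6-4*w - (4-2*w)*p + (6-2*w)*t)) := by
        rw [key_id]
        have h1 : (0:ℝ) ≤ 86-59*w := by linarith
        have h2' : (0:ℝ) ≤ 7-3*w := by linarith
        exact add_nonneg (mul_nonneg h1 hS) (mul_nonneg h2' hPF)
      have key : 0 ≤ p * (6-4*w - (4-2*w)*p + (6-2*w)*t) :=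
        (mul_nonneg_iff_of_pos_left h20).mp key20
      have := (mul_nonneg_iff_of_pos_left hppos).mp key
      linarith
  -- assemble : objective = value at B=1 plus (B-1) * coefficient
  nlinarith [mul_nonneg (by linarith : (0:ℝ) ≤ B - 1)
      (by linarith : 0 ≤ r + (4-w)*(s+t) - (2-w)*(p+q)), hG, hsum]
end

section
/- For all real numbers α, ω ∈ [0,1], if α² + 2α(1−α)·ω/(ω+1) ≥ 1/2, then 1 − α − α·ω ≤ 0.293. -/
/-- random-choice program, `k = 2`: for `α, ω ∈ [0,1]`, if
`α² + 2α(1-α)·ω/(ω+1) ≥ 1/2`, then `1 - α - α·ω ≤ 0.293`. -/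
theorem stmt15 (α ω : ℝ) (hα0 : 0 ≤ α) (hα1 : α ≤ 1) (hω0 : 0 ≤ ω) (hω1 : ω ≤ 1)
    (hcon : α ^ 2 + 2 * α * (1 - α) * ω / (ω + 1) ≥ 1 / 2) :
    1 - α - α * ω ≤ 0.293 := by
  have hpos : (0:ℝ) < ω + 1 := by linarith
  have h : α ^ 2 * (ω + 1) + 2 * α * (1 - α) * ω ≥ (ω + 1) / 2 := by
    nlinarith [mul_le_mul_of_nonneg_right hcon (le_of_lt hpos),
      div_mul_cancel₀ (2 * α * (1 - α) * ω) (ne_of_gt hpos)]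
  nlinarith [sq_nonneg (α + α*ω - 0.707), sq_nonneg (1 - α), mul_nonneg hα0 hω0,
    mul_nonneg (mul_nonneg hα0 hα0) hω0, sq_nonneg (α - 1), sq_nonneg ω,
    mul_nonneg (sub_nonneg.mpr hα1) hω0]
end

section
/- For all real numbers α, ω ∈ [0,1], if 3α(1−α)²·ω/(ω+2) + 3α²(1−α)·(2ω)/(2ω+1) + α³ ≥ 1/2, then 1 − α − α·ω ≤ 0.207. -/
/-- random-choice program, `k = 3`: for `α, ω ∈ [0,1]`, if
`3α(1-α)²·ω/(ω+2) + 3α²(1-α)·2ω/(2ω+1) + α³ ≥ 1/2`, then `1 - α - α·ω ≤ 0.207`. -/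
theorem stmt16 (α ω : ℝ) (hα0 : 0 ≤ α) (hα1 : α ≤ 1) (hω0 : 0 ≤ ω) (hω1 : ω ≤ 1)
    (hcon : 3 * α * (1 - α) ^ 2 * ω / (ω + 2)
        + 3 * α ^ 2 * (1 - α) * (2 * ω) / (2 * ω + 1) + α ^ 3 ≥ 1 / 2) :
    1 - α - α * ω ≤ 0.207 := by
  have h1 : (0:ℝ) < ω + 2 := by linarith
  have h2 : (0:ℝ) < 2 * ω + 1 := by linarith
  have hp : 3 * α * (1 - α) ^ 2 * ω * (2 * ω + 1)
      + 3 * α ^ 2 * (1 - α) * (2 * ω) * (ω + 2)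
      + α ^ 3 * ((ω + 2) * (2 * ω + 1)) ≥ 1 / 2 * ((ω + 2) * (2 * ω + 1)) := by
    have h3 : (0:ℝ) < (ω + 2) * (2 * ω + 1) := mul_pos h1 h2
    rw [ge_iff_le, ← sub_nonneg] at hcon
    have key : (3 * α * (1 - α) ^ 2 * ω / (ω + 2)
        + 3 * α ^ 2 * (1 - α) * (2 * ω) / (2 * ω + 1) + α ^ 3 - 1 / 2) * ((ω + 2) * (2 * ω + 1))
        = 3 * α * (1 - α) ^ 2 * ω * (2 * ω + 1)
      + 3 * α ^ 2 * (1 - α) * (2 * ω) * (ω + 2)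
      + α ^ 3 * ((ω + 2) * (2 * ω + 1)) - 1 / 2 * ((ω + 2) * (2 * ω + 1)) := by
      field_simp
    nlinarith [mul_nonneg hcon h3.le]
  by_contra hgoal
  push_neg at hgoal
  nlinarith [sq_nonneg (1 - α - α * ω), sq_nonneg α, sq_nonneg ω, sq_nonneg (α*ω), sq_nonneg (α - 1), mul_nonneg hα0 hω0, sq_nonneg (ω - 1), mul_nonneg (mul_nonneg hα0 hα0) hω0]
end
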